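/- For every n ≥ 1, (2n+1) + Σ_{r=1}^{n} [ C(n+r, 2r+1) + C(n+r+1, 2r+1) ] = F_{2n} + F_{2n+2}, where F_k denotes the k-th Fibonacci number. -/

import Mathlib

/-!
The sum `∑ r, C(n + r, 2r + 1)` runs along a shallow diagonal of Pascal's triangle: with
`i = n + r` and `j = n - 1 - r` its terms are `C(i, j)` for `i + j = 2n - 1`, and the terms of that
antidiagonal with `i < n` vanish. Hence it equals `F_{2n}`. The two halves of the sum in the theorem
are this sum for `n` and for `n + 1`, each without its `r = 0` term `C(m, 1) = m`.
-/

open Finset Nat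

theorem Finset.sum_range_succ_eq_add_sum_Icc {M : Type*} [AddCommMonoid M] (f : ℕ → M) (n : ℕ) :
    ∑ r ∈ range (n + 1), f r = f 0 + ∑ r ∈ Icc 1 n, f r := by
  rw [range_eq_Ico, sum_eq_sum_Ico_succ_bot (by omega : 0 < n + 1), zero_add,
    ← Ico_add_one_right_eq_Icc]

theorem Nat.fib_two_mul_eq_sum_range_choose (n N : ℕ) (hN : n ≤ N) :
    fib (2 * n) = ∑ r ∈ range N, (n + r).choose (2 * r + 1) := by
  rcases n with _ | n
  · exact (sum_eq_zero fun r _ => choose_eq_zero_of_lt (by omega)).symm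
  rw [show 2 * (n + 1) = 2 * n + 1 + 1 by ring, fib_succ_eq_sum_choose, eq_comm]
  refine sum_bij_ne_zero (fun r _ _ => (n + 1 + r, n - r)) ?_ ?_ ?_ ?_
  · intro r _ hr
    have := choose_eq_zero_of_lt.mt hr
    simp only [HasAntidiagonal.mem_antidiagonal]
    omega
  · intro r₁ _ _ r₂ _ _ h
    simp only [Prod.mk.injEq] at h
    omega
  · rintro ⟨i, j⟩ hij hc
    have := choose_eq_zero_of_lt.mt hc
    simp only [HasAntidiagonal.mem_antidiagonal] at hij
    exact ⟨i - (n + 1), mem_range.2 (by omega), (choose_pos (by omega)).ne',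
      by simp only [Prod.mk.injEq]; omega⟩
  · intro r _ hr
    have := choose_eq_zero_of_lt.mt hr
    exact choose_symm_of_eq_add (by omega)

theorem stmt_2_general (n : ℕ) :
    (2*n+1) + ∑ r ∈ Finset.Icc 1 n, ((n+r).choose (2*r+1) + (n+r+1).choose (2*r+1))
      = Nat.fib (2*n) + Nat.fib (2*n+2) := by
  have hlow := fib_two_mul_eq_sum_range_choose n (n + 1) n.le_succ
  have hhigh := fib_two_mul_eq_sum_range_choose (n + 1) (n + 1) le_rfl
  rw [sum_range_succ_eq_add_sum_Icc] at hlow hhigh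
  simp only [add_right_comm n 1, mul_add_one] at hhigh
  simp only [add_zero, mul_zero, zero_add, choose_one_right] at hlow hhigh
  rw [sum_add_distrib]
  omega

theorem stmt_2 (n : ℕ) (hn : 1 ≤ n) :
    (2*n+1) + ∑ r ∈ Finset.Icc 1 n, ((n+r).choose (2*r+1) + (n+r+1).choose (2*r+1))
      = Nat.fib (2*n) + Nat.fib (2*n+2) :=
  stmt_2_general n
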